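/- arXiv:2601.04872 — 3 statements merged into one kernel-verified Lean document; each statement's English description precedes it below -/
import Mathlib

section
/- If L/K is any finite extension of fields of characteristic p > 0, then [L^{1/p} : L] = [K^{1/p} : K] (in the sense that one is finite iff the other is, and then they are equal); in particular the p-degree of L equals the p-degree of K. -/
/-!
For subfields `A ≤ B` of `Ω`, write `A' = A.comap φ` for the preimage under Frobenius `φ`. The
tower law applied to `A ≤ B ≤ B'` and `A ≤ A' ≤ B'` gives
`[B : A] · [B' : B] = [B' : A] = [A' : A] · [B' : A']`, and since `φ` is surjective on the
algebraically closed field `Ω`, pulling back along it preserves relative degrees: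
`[B' : A'] = [B : A]`. For `A = K`, `B = L` the degree `[B : A] = [L : K]` is finite and nonzero,
so it cancels.
-/

open Cardinal

theorem Cardinal.eq_of_mul_eq_mul_left_of_lt_aleph0 {r x y : Cardinal} (h0 : r ≠ 0)
    (hr : r < ℵ₀) (h : r * x = r * y) : x = y := by
  have hfin : ∀ z : Cardinal, r * z < ℵ₀ ↔ z < ℵ₀ := fun z => by
    simp +contextual [mul_lt_aleph0_iff, h0, hr, aleph0_pos]
  rcases lt_or_ge x ℵ₀ with hx | hx
  · have hy : y < ℵ₀ := (hfin y).1 (h ▸ (hfin x).2 hx)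
    lift r to ℕ using hr
    lift x to ℕ using hx
    lift y to ℕ using hy
    norm_cast at h h0 ⊢
    exact Nat.eq_of_mul_eq_mul_left (Nat.pos_of_ne_zero h0) h
  · have hy : ℵ₀ ≤ y := not_lt.1 fun hy => not_lt.2 hx ((hfin x).1 (h ▸ (hfin y).2 hy))
    rwa [mul_eq_right hx (hr.le.trans hx) h0, mul_eq_right hy (hr.le.trans hy) h0] at h

namespace Subfield

theorem relrank_ne_zero {E : Type*} [Field E] (A B : Subfield E) : A.relrank B ≠ 0 :=
  rank_pos.ne'

theorem le_comap_frobenius {E : Type*} [Field E] (p : ℕ) [ExpChar E p] (A : Subfield E) :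
    A ≤ A.comap (frobenius E p) := fun x hx => by
  simpa only [mem_comap, frobenius_def] using pow_mem hx p

theorem fieldRange_algebraMap_le_of_isScalarTower (K L E : Type*) [Field K] [Field L] [Field E]
    [Algebra K L] [Algebra L E] [Algebra K E] [IsScalarTower K L E] :
    (algebraMap K E).fieldRange ≤ (algebraMap L E).fieldRange :=
  IntermediateField.fieldRange_le (IsScalarTower.toAlgHom K L E).fieldRange

theorem relrank_fieldRange_lt_aleph0 (K L E : Type*) [Field K] [Field L] [Field E]
    [Algebra K L] [Algebra L E] [Algebra K E] [IsScalarTower K L E] [FiniteDimensional K L] :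
    (algebraMap K E).fieldRange.relrank (algebraMap L E).fieldRange < ℵ₀ := by
  let M := (IsScalarTower.toAlgHom K L E).fieldRange
  have : FiniteDimensional K M :=
    (AlgEquiv.ofInjectiveField (IsScalarTower.toAlgHom K L E)).toLinearEquiv.finiteDimensional
  have h := IntermediateField.relrank_bot_left M
  rw [IntermediateField.relrank, IntermediateField.bot_toSubfield,
    AlgHom.fieldRange_toSubfield] at h
  exact h ▸ Module.rank_lt_aleph0 K M

theorem relrank_comap_eq_of_relrank_lt_aleph0 {E : Type*} [Field E] {f : E →+* E}
    (hf : Function.Surjective f) {A B : Subfield E} (hAB : A ≤ B) (hA : A ≤ A.comap f)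
    (hB : B ≤ B.comap f) (hfin : A.relrank B < ℵ₀) :
    B.relrank (B.comap f) = A.relrank (A.comap f) := by
  have hAB' : A.comap f ≤ B.comap f := fun _ hx => hAB hx
  refine Cardinal.eq_of_mul_eq_mul_left_of_lt_aleph0 (A.relrank_ne_zero B) hfin ?_
  calc A.relrank B * B.relrank (B.comap f)
      = A.relrank (B.comap f) := relrank_mul_relrank hAB hB
    _ = A.relrank (A.comap f) * (A.comap f).relrank (B.comap f) :=
      (relrank_mul_relrank hA hAB').symm
    _ = A.relrank B * A.relrank (A.comap f) := by
      rw [relrank_comap_comap_eq_relrank_of_surjective A B f hf, mul_comm]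

end Subfield

theorem pDegree_eq_of_finite_general {p : ℕ} [Fact p.Prime]
    (K L Ω : Type*) [Field K] [Field L] [Field Ω] [CharP Ω p]
    [Algebra K L] [Algebra L Ω] [Algebra K Ω] [IsScalarTower K L Ω]
    [IsAlgClosure L Ω] [FiniteDimensional K L] :
    Subfield.relrank (algebraMap L Ω).fieldRange
        (Subfield.comap (frobenius Ω p) (algebraMap L Ω).fieldRange) =
      Subfield.relrank (algebraMap K Ω).fieldRange
        (Subfield.comap (frobenius Ω p) (algebraMap K Ω).fieldRange) := by
  have : IsAlgClosed Ω := IsAlgClosure.isAlgClosed L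
  exact Subfield.relrank_comap_eq_of_relrank_lt_aleph0 (surjective_frobenius Ω p)
    (Subfield.fieldRange_algebraMap_le_of_isScalarTower K L Ω)
    (Subfield.le_comap_frobenius p _) (Subfield.le_comap_frobenius p _)
    (Subfield.relrank_fieldRange_lt_aleph0 K L Ω)

/-- If `L/K` is any finite extension of fields of characteristic `p > 0`, then
`[L^{1/p} : L] = [K^{1/p} : K]` (as cardinals, so in particular one is finite
iff the other is, and then they are equal); in particular the p-degree of `L`
equals the p-degree of `K`. Here `E^{1/p}` is the preimage of (the image of)
`E` under the Frobenius endomorphism of a fixed algebraic closure `Ω` of `L`. -/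
theorem pDegree_eq_of_finite {p : ℕ} [Fact p.Prime]
    (K L Ω : Type*) [Field K] [Field L] [Field Ω] [CharP K p] [CharP Ω p]
    [Algebra K L] [Algebra L Ω] [Algebra K Ω] [IsScalarTower K L Ω]
    [IsAlgClosure L Ω] [FiniteDimensional K L] :
    Subfield.relrank (algebraMap L Ω).fieldRange
        (Subfield.comap (frobenius Ω p) (algebraMap L Ω).fieldRange) =
      Subfield.relrank (algebraMap K Ω).fieldRange
        (Subfield.comap (frobenius Ω p) (algebraMap K Ω).fieldRange) :=
  pDegree_eq_of_finite_general K L Ω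
end

section
/- A relatively algebraically closed subfield of a henselian valued field is itself henselian (with the restricted valuation). -/
universe u u' v

namespace VFD

variable {K : Type u} {L : Type v} [Field K] [Field L]
variable {Γ : Type*} [LinearOrderedCommGroupWithZero Γ]

/-- The value group of a valuation `v` on a field, as a subgroup of `Γˣ`:
the subgroup generated by all nonzero values of `v`. -/
def valueGroup (v : Valuation K Γ) : Subgroup Γˣ :=
  Subgroup.closure { γ : Γˣ | ∃ x : K, v x = γ }

/-- The ramification index `(v L : v K)` of an extension of valued fields along `ι`. -/
noncomputable def ramIdx (ι : K →+* L) (vL : Valuation L Γ) : ℕ :=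
  Subgroup.relIndex (valueGroup (vL.comap ι)) (valueGroup vL)

/-- The induced ring homomorphism between valuation rings. -/
def intHom (ι : K →+* L) (vL : Valuation L Γ) :
    (vL.comap ι).valuationSubring →+* vL.valuationSubring where
  toFun x := ⟨ι x, x.2⟩
  map_one' := by ext; simp
  map_mul' x y := by ext; simp
  map_zero' := by ext; simp
  map_add' x y := by ext; simp

theorem isLocalHom_intHom (ι : K →+* L) (vL : Valuation L Γ) :
    IsLocalHom (intHom ι vL) := by
  constructor
  intro a ha
  have hK : (vL.comap ι).Integers (vL.comap ι).valuationSubring :=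
    { hom_inj := Subtype.coe_injective
      map_le_one := fun r => r.2
      exists_of_le_one := fun r hr => ⟨⟨r, hr⟩, rfl⟩ }
  have hL : vL.Integers vL.valuationSubring :=
    { hom_inj := Subtype.coe_injective
      map_le_one := fun r => r.2
      exists_of_le_one := fun r hr => ⟨⟨r, hr⟩, rfl⟩ }
  rw [hK.isUnit_iff_valuation_eq_one]
  exact hL.isUnit_iff_valuation_eq_one.mp ha

/-- The induced homomorphism between residue fields. -/
noncomputable def resMap (ι : K →+* L) (vL : Valuation L Γ) :
    IsLocalRing.ResidueField (vL.comap ι).valuationSubring →+*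
      IsLocalRing.ResidueField vL.valuationSubring :=
  letI := isLocalHom_intHom ι vL
  IsLocalRing.ResidueField.map (intHom ι vL)

/-- The residue degree `[Lv : Kv]` of an extension of valued fields. -/
noncomputable def resDeg (ι : K →+* L) (vL : Valuation L Γ) : ℕ :=
  letI := (resMap ι vL).toAlgebra
  Module.finrank (IsLocalRing.ResidueField (vL.comap ι).valuationSubring)
    (IsLocalRing.ResidueField vL.valuationSubring)

/-- The defect `d(L|K,v) = [L:K] / ((vL : vK) [Lv : Kv])` of a finite extension of
valued fields (by the Lemma of Ostrowski the division is exact for finite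
unibranched extensions). -/
noncomputable def defect (ι : K →+* L) (vL : Valuation L Γ) : ℕ :=
  (letI := ι.toAlgebra; Module.finrank K L) / (ramIdx ι vL * resDeg ι vL)

/-- An extension of valued fields is unibranched if the valuation (subring) on `L`
is the unique one lying over the given valuation (subring) of `K`. -/
def Unibranched (ι : K →+* L) (vL : Valuation L Γ) : Prop :=
  ∀ B : ValuationSubring L, B.comap ι = vL.valuationSubring.comap ι →
    B = vL.valuationSubring

/-- An extension of valued fields is immediate if it induces no extension of the
value group nor of the residue field. -/
def IsImmediate (ι : K →+* L) (vL : Valuation L Γ) : Prop :=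
  (∀ y : L, ∃ x : K, vL (ι x) = vL y) ∧
    (∀ y : L, vL y ≤ 1 → ∃ x : K, vL (y - ι x) < 1)

/-- A valued field is maximal if it admits no proper immediate extension. -/
def IsMaximalValued (vK : Valuation K Γ) : Prop :=
  ∀ (L : Type u) [Field L] (ι : K →+* L) (Γ' : Type u')
    [LinearOrderedCommGroupWithZero Γ'] (vL : Valuation L Γ'),
    (vL.comap ι).IsEquiv vK → IsImmediate ι vL → Function.Surjective ι

/-- A valued field is algebraically maximal if it admits no proper immediate
algebraic extension. -/
def IsAlgMaximal (vK : Valuation K Γ) : Prop :=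
  ∀ (L : Type u) [Field L] (ι : K →+* L) (Γ' : Type u')
    [LinearOrderedCommGroupWithZero Γ'] (vL : Valuation L Γ'),
    (∀ y : L, letI := ι.toAlgebra; IsAlgebraic K y) →
    (vL.comap ι).IsEquiv vK → IsImmediate ι vL → Function.Surjective ι

/-- A henselian valued field is defectless if every finite unibranched extension
has defect 1. -/
def IsDefectless (vK : Valuation K Γ) : Prop :=
  ∀ (L : Type u) [Field L] (ι : K →+* L) (Γ' : Type u')
    [LinearOrderedCommGroupWithZero Γ'] (vL : Valuation L Γ'),
    (letI := ι.toAlgebra; FiniteDimensional K L) →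
    (vL.comap ι).IsEquiv vK → Unibranched ι vL → defect ι vL = 1

/-- A valued field is inseparably defectless if every finite purely inseparable
extension has defect 1. -/
def IsInsepDefectless (vK : Valuation K Γ) : Prop :=
  ∀ (L : Type u) [Field L] (ι : K →+* L) (Γ' : Type u')
    [LinearOrderedCommGroupWithZero Γ'] (vL : Valuation L Γ'),
    (letI := ι.toAlgebra; FiniteDimensional K L) →
    (letI := ι.toAlgebra; IsPurelyInseparable K L) →
    (vL.comap ι).IsEquiv vK → Unibranched ι vL → defect ι vL = 1

/-- A valuation is discrete if its value group is a nontrivial cyclic group. -/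
def IsDiscreteValued (v : Valuation K Γ) : Prop :=
  ∃ γ : Γˣ, γ ≠ 1 ∧ valueGroup v = Subgroup.zpowers γ

/-- A valued field is henselian if its valuation ring is a henselian local ring. -/
abbrev IsHenselianValued (v : Valuation K Γ) : Prop :=
  HenselianLocalRing v.valuationSubring

end VFD

/-
Take a monic polynomial over the valuation ring of `L` with a simple root modulo the maximal
ideal. Hensel's lemma in the valuation ring of `F` lifts that root to an actual root `a`. Being a
root of a nonzero polynomial over `L`, `a` is algebraic over `L`, hence lies in `L`; so the lift
already lives in the valuation ring of `L`.
-/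

open Polynomial IsLocalRing

theorem HenselianLocalRing.of_injective_of_roots_mem_range {R S : Type*} [CommRing R]
    [IsLocalRing R] [CommRing S] [HenselianLocalRing S] (φ : R →+* S) [IsLocalHom φ]
    (hφ : Function.Injective φ)
    (hroots : ∀ f : R[X], f.Monic → ∀ s : S, (f.map φ).IsRoot s → s ∈ φ.range) :
    HenselianLocalRing R where
  is_henselian f hf a₀ h₀ h₁ := by
    have hmem (x : R) : φ x ∈ maximalIdeal S ↔ x ∈ maximalIdeal R := by
      rw [← Ideal.mem_comap, maximalIdeal_comap]
    obtain ⟨s, hs, hs₀⟩ := HenselianLocalRing.is_henselian (f.map φ) (hf.map φ) (φ a₀)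
      (by rwa [eval_map_apply, hmem])
      (by rw [derivative_map, eval_map_apply]; exact h₁.map φ)
    obtain ⟨r, rfl⟩ := hroots f hf s hs
    refine ⟨r, hφ ?_, ?_⟩
    · rwa [map_zero, ← eval_map_apply]
    · rwa [← hmem, map_sub]

namespace VFD

theorem intHom_injective {K L Γ : Type*} [Field K] [Field L] [LinearOrderedCommGroupWithZero Γ]
    (ι : K →+* L) (vL : Valuation L Γ) : Function.Injective (intHom ι vL) :=
  fun _ _ h => Subtype.ext (ι.injective (congrArg Subtype.val h))

variable {F : Type*} [Field F] {Γ : Type*} [LinearOrderedCommGroupWithZero Γ]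
  (v : Valuation F Γ) (L : Subfield F)

theorem isAlgebraic_of_isRoot_map_intHom {f : (v.comap L.subtype).valuationSubring[X]}
    (hf : f.Monic) {s : v.valuationSubring} (hs : (f.map (intHom L.subtype v)).IsRoot s) :
    IsAlgebraic L (s : F) := by
  refine ⟨f.map (Subring.subtype _), (hf.map _).ne_zero, ?_⟩
  have hroot := congrArg v.valuationSubring.subtype hs
  rw [eval_map, hom_eval₂, map_zero] at hroot
  rwa [aeval_def, eval₂_map]

theorem mem_range_intHom_of_mem {s : v.valuationSubring} (hs : (s : F) ∈ L) :
    s ∈ (intHom L.subtype v).range :=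
  ⟨⟨⟨s, hs⟩, s.2⟩, rfl⟩

end VFD

/-- A relatively algebraically closed subfield of a henselian valued field is
itself henselian (with the restricted valuation). -/
theorem henselian_of_relatively_algebraically_closed
    {F : Type u} [Field F] {Γ : Type u'} [LinearOrderedCommGroupWithZero Γ]
    (v : Valuation F Γ) (hF : VFD.IsHenselianValued v)
    (L : Subfield F) (hrel : ∀ x : F, IsAlgebraic L x → x ∈ L) :
    VFD.IsHenselianValued (v.comap L.subtype) :=
  haveI := VFD.isLocalHom_intHom L.subtype v
  HenselianLocalRing.of_injective_of_roots_mem_range (VFD.intHom L.subtype v)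
    (VFD.intHom_injective L.subtype v)
    fun _ hf _ hs =>
      VFD.mem_range_intHom_of_mem v L (hrel _ (VFD.isAlgebraic_of_isRoot_map_intHom v L hf hs))
end

section
/- Let (L_0, v) be a valued field whose completion is its unique maximal immediate extension up to valuation-preserving isomorphism over L_0, and suppose L_0 is relatively algebraically closed in this completion. Then (L_0, v) is algebraically maximal, i.e., admits no nontrivial immediate algebraic extensions. -/
/-!
Let `(L, v)` be an immediate algebraic extension of `(L₀, v)`. By Krull's theorem `(L, v)` has a
maximal immediate extension `M`, which is then also a maximal immediate extension of `(L₀, v)`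
and hence isomorphic to `C` over `L₀`. This embeds `L` into `C` over `L₀`; the
image is algebraic over `L₀`, so it lies in `L₀`, i.e. `L = L₀`.

Krull's theorem follows from Zorn's lemma once all immediate extensions of `(L, v)` can be
realised inside one fixed set: by Gravett's bound an immediate extension `N` injects into
`L → Set L`, through the residues of the elements of `N` measured against chosen centres of balls.
-/

universe u u' v

theorem Function.Injective.injective_extend {α β γ : Type*} {f : α → β} {g : α → γ} {e : β → γ}
    (hf : f.Injective) (hg : g.Injective) (he : e.Injective)
    (hdisj : ∀ b, e b ∉ Set.range g) : (Function.extend f g e).Injective := by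
  rw [← Set.injOn_univ, ← Set.union_compl_self (Set.range f), Set.injOn_union disjoint_compl_right]
  refine ⟨hf.extend_injOn hg, fun b hb b' hb' h => he ?_, ?_⟩
  · rwa [Function.extend_apply' _ _ _ hb, Function.extend_apply' _ _ _ hb'] at h
  · rintro _ ⟨a, rfl⟩ b hb h
    rw [hf.extend_apply, Function.extend_apply' _ _ _ hb] at h
    exact hdisj b ⟨a, h⟩

open Cardinal in
theorem exists_injective_extend_val {T N : Type u} [Infinite T] {A : Set (Set T)} {ι : A → N}
    (hι : ι.Injective) (hA : #A ≤ #T) (hN : #N ≤ #T) :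
    ∃ h : N → Set T, h.Injective ∧ ∀ x, h (ι x) = x := by
  have : Infinite (Set T) := Infinite.of_injective _ Set.singleton_injective
  have hT : #T < #(Set T) := by simpa only [mk_set] using cantor #T
  obtain ⟨e⟩ : Nonempty (N ↪ ↥Aᶜ) := by
    rw [← le_def, mk_compl_of_infinite A (hA.trans_lt hT)]
    exact hN.trans hT.le
  refine ⟨Function.extend ι Subtype.val fun n => e n,
    hι.injective_extend Subtype.val_injective (Subtype.val_injective.comp e.injective) ?_,
    hι.extend_apply _ _⟩
  rintro n ⟨x, hx⟩
  exact (e n).2 (hx ▸ x.2)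

namespace VFD

section Immediate

variable {K L N : Type*} [Field K] [Field L] [Field N]
  {Γ Γ' : Type*} [LinearOrderedCommGroupWithZero Γ] [LinearOrderedCommGroupWithZero Γ']

theorem isImmediate_id (w : Valuation N Γ) : IsImmediate (RingHom.id N) w :=
  ⟨fun y => ⟨y, rfl⟩, fun y _ => ⟨y, by simp⟩⟩

theorem IsImmediate.comp {ι₁ : K →+* L} {ι₂ : L →+* N} {vN : Valuation N Γ}
    (h₁ : IsImmediate ι₁ (vN.comap ι₂)) (h₂ : IsImmediate ι₂ vN) :
    IsImmediate (ι₂.comp ι₁) vN := by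
  refine ⟨fun n => ?_, fun n hn => ?_⟩
  · obtain ⟨l, hl⟩ := h₂.1 n
    obtain ⟨k, hk⟩ := h₁.1 l
    exact ⟨k, hk.trans hl⟩
  · obtain ⟨l, hl⟩ := h₂.2 n hn
    have hl₁ : vN (ι₂ l) ≤ 1 := by
      simpa using vN.map_sub_le hn hl.le
    obtain ⟨k, hk⟩ := h₁.2 l hl₁
    have hsplit : n - ι₂ (ι₁ k) = (n - ι₂ l) + ι₂ (l - ι₁ k) := by
      rw [map_sub]; ring
    refine ⟨k, ?_⟩
    rw [RingHom.comp_apply, hsplit]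
    exact (vN.map_add _ _).trans_lt (max_lt hl hk)

theorem IsImmediate.of_isEquiv {ι : K →+* N} {v₁ : Valuation N Γ} {v₂ : Valuation N Γ'}
    (h : v₁.IsEquiv v₂) (himm : IsImmediate ι v₁) : IsImmediate ι v₂ :=
  ⟨fun n => (himm.1 n).imp fun _ => h.eq_iff.1,
    fun n hn => (himm.2 n (h.le_one_iff_le_one.2 hn)).imp fun _ => h.lt_one_iff_lt_one.1⟩

/-- The values of an immediate extension are values of the base field, so its valuation can be
rewritten to take values in the value monoid of the base. -/
theorem IsImmediate.exists_valuation_comap_eq {vK : Valuation K Γ} {ι : K →+* N}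
    {vN : Valuation N Γ'} (hequiv : (vN.comap ι).IsEquiv vK) (himm : IsImmediate ι vN) :
    ∃ wN : Valuation N Γ, wN.comap ι = vK ∧ IsImmediate ι wN := by
  choose m hm using himm.1
  have le_iff : ∀ a b, vK (m a) ≤ vK (m b) ↔ vN a ≤ vN b := fun a b => by
    rw [← hequiv, Valuation.comap_apply, Valuation.comap_apply, hm, hm]
  have eq_of_eq : ∀ a b, vN a = vN b → vK (m a) = vK (m b) := fun a b h =>
    le_antisymm ((le_iff a b).2 h.le) ((le_iff b a).2 h.ge)
  have on_base : ∀ k, vK (m (ι k)) = vK k := fun k => hequiv.eq_iff.1 (hm (ι k))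
  have on_image : ∀ a k, vN a = vN (ι k) → vK (m a) = vK k := fun a k h =>
    (eq_of_eq a (ι k) h).trans (on_base k)
  let wN : Valuation N Γ :=
    { toFun := fun a => vK (m a)
      map_zero' := by simpa using on_image 0 0 (by simp)
      map_one' := by simpa using on_image 1 1 (by simp)
      map_mul' := fun a b => by
        simpa using on_image (a * b) (m a * m b) (by simp [hm])
      map_add_le_max' := fun a b => by
        rcases le_total (vN a) (vN b) with h | h
        · exact le_max_of_le_right ((le_iff _ _).2 ((vN.map_add a b).trans (by simp [h])))
        · exact le_max_of_le_left ((le_iff _ _).2 ((vN.map_add a b).trans (by simp [h]))) }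
  refine ⟨wN, Valuation.ext on_base, himm.of_isEquiv fun a b => (le_iff a b).symm⟩

/-- Gravett's bound. The ball of radius `v t` around `a` gets a centre `c` depending only on the
ball, and `Φ a t` is the set of `x ∈ K` approximating `(a - c) / t` in the residue field; for
`a ≠ b` the two sets differ at any `t` with `v t = v (a - b)`. -/
theorem IsImmediate.exists_injective_fun_set {J : K →+* N} {vN : Valuation N Γ}
    (himm : IsImmediate J vN) : ∃ Φ : N → K → Set K, Function.Injective Φ := by
  let center : N → K → N := fun a t => Classical.epsilon fun c => vN (a - c) ≤ vN (J t)
  have center_spec : ∀ a t, vN (a - center a t) ≤ vN (J t) := fun a t =>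
    Classical.epsilon_spec (p := fun c => vN (a - c) ≤ vN (J t)) ⟨a, by simp⟩
  have center_eq : ∀ a b t, vN (a - b) ≤ vN (J t) → center a t = center b t := by
    intro a b t hab
    have hball : ∀ c, vN (a - c) ≤ vN (J t) ↔ vN (b - c) ≤ vN (J t) := fun c =>
      ⟨fun h => by simpa using vN.map_sub_le h hab,
        fun h => by simpa using vN.map_add_le h hab⟩
    simp only [center, hball]
  refine ⟨fun a t => {x | vN (a - center a t - J x * J t) < vN (J t)}, fun a b hab => ?_⟩
  by_contra hne
  obtain ⟨t, ht⟩ := himm.1 (a - b)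
  have hvt : vN (J t) ≠ 0 := by simpa [ht] using sub_ne_zero.2 hne
  have hJt : J t ≠ 0 := fun h => hvt (by simp [h])
  obtain ⟨x, hx⟩ := himm.2 ((a - center a t) / J t) (by
    rw [map_div₀, div_le_one₀ (zero_lt_iff.2 hvt)]; exact center_spec a t)
  have hxa : vN (a - center a t - J x * J t) < vN (J t) := by
    have : a - center a t - J x * J t = ((a - center a t) / J t - J x) * J t := by
      field_simp
    rw [this, map_mul]
    exact mul_lt_of_lt_one_left (zero_lt_iff.2 hvt) hx
  have hxb : vN (b - center b t - J x * J t) < vN (J t) :=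
    (Set.ext_iff.1 (congrFun hab t) x).1 hxa
  have hdiff : a - b = (a - center a t - J x * J t) - (b - center b t - J x * J t) := by
    rw [center_eq a b t ht.ge]; ring
  have hlt : vN (a - b) < vN (J t) := by
    rw [hdiff]
    exact (vN.map_sub _ _).trans_lt (max_lt hxa hxb)
  exact hlt.ne' ht

end Immediate

/-- An immediate extension of `(L, w)` realised on a subset `carrier` of a fixed type `S`. The
operations are total functions on `S` of which only the restrictions to `carrier` matter: this
makes such extensions a set, to which Zorn's lemma applies, and lets a chain of them be glued
without transport between different subtypes. -/
structure ImmediateExtOn (S : Type*) {L : Type*} [Field L] {Γ : Type*}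
    [LinearOrderedCommGroupWithZero Γ] (w : Valuation L Γ) where
  carrier : Set S
  add : S → S → S
  mul : S → S → S
  neg : S → S
  zero : S
  one : S
  val : S → Γ
  emb : L → S
  add_mem : ∀ {x y}, x ∈ carrier → y ∈ carrier → add x y ∈ carrier
  mul_mem : ∀ {x y}, x ∈ carrier → y ∈ carrier → mul x y ∈ carrier
  neg_mem : ∀ {x}, x ∈ carrier → neg x ∈ carrier
  zero_mem : zero ∈ carrier
  one_mem : one ∈ carrier
  emb_mem : ∀ a, emb a ∈ carrier
  add_assoc : ∀ {x y z}, x ∈ carrier → y ∈ carrier → z ∈ carrier →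
    add (add x y) z = add x (add y z)
  zero_add : ∀ {x}, x ∈ carrier → add zero x = x
  neg_add_cancel : ∀ {x}, x ∈ carrier → add (neg x) x = zero
  mul_assoc : ∀ {x y z}, x ∈ carrier → y ∈ carrier → z ∈ carrier →
    mul (mul x y) z = mul x (mul y z)
  mul_comm : ∀ {x y}, x ∈ carrier → y ∈ carrier → mul x y = mul y x
  one_mul : ∀ {x}, x ∈ carrier → mul one x = x
  left_distrib : ∀ {x y z}, x ∈ carrier → y ∈ carrier → z ∈ carrier →
    mul x (add y z) = add (mul x y) (mul x z)
  zero_ne_one : zero ≠ one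
  exists_mul_eq_one : ∀ {x}, x ∈ carrier → x ≠ zero → ∃ y ∈ carrier, mul x y = one
  emb_add : ∀ a b, emb (a + b) = add (emb a) (emb b)
  emb_mul : ∀ a b, emb (a * b) = mul (emb a) (emb b)
  emb_one : emb 1 = one
  val_mul : ∀ {x y}, x ∈ carrier → y ∈ carrier → val (mul x y) = val x * val y
  val_add : ∀ {x y}, x ∈ carrier → y ∈ carrier → val (add x y) ≤ max (val x) (val y)
  val_emb : ∀ a, val (emb a) = w a
  exists_val_emb_eq : ∀ {x}, x ∈ carrier → ∃ a, val (emb a) = val x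
  exists_val_sub_emb_lt_one : ∀ {x}, x ∈ carrier → val x ≤ 1 →
    ∃ a, val (add x (neg (emb a))) < 1

namespace ImmediateExtOn

variable {S L : Type*} [Field L] {Γ : Type*} [LinearOrderedCommGroupWithZero Γ]
  {w : Valuation L Γ}

structure Le (d₁ d₂ : ImmediateExtOn S w) : Prop where
  subset : d₁.carrier ⊆ d₂.carrier
  add_eq : ∀ {x y}, x ∈ d₁.carrier → y ∈ d₁.carrier → d₂.add x y = d₁.add x y
  mul_eq : ∀ {x y}, x ∈ d₁.carrier → y ∈ d₁.carrier → d₂.mul x y = d₁.mul x y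
  neg_eq : ∀ {x}, x ∈ d₁.carrier → d₂.neg x = d₁.neg x
  zero_eq : d₂.zero = d₁.zero
  one_eq : d₂.one = d₁.one
  val_eq : ∀ {x}, x ∈ d₁.carrier → d₂.val x = d₁.val x
  emb_eq : d₂.emb = d₁.emb

theorem Le.refl (d : ImmediateExtOn S w) : Le d d :=
  ⟨subset_rfl, fun _ _ => rfl, fun _ _ => rfl, fun _ => rfl, rfl, rfl, fun _ => rfl, rfl⟩

instance : Std.Refl (Le (S := S) (w := w)) := ⟨Le.refl⟩

theorem Le.trans {d₁ d₂ d₃ : ImmediateExtOn S w} (h₁ : Le d₁ d₂) (h₂ : Le d₂ d₃) : Le d₁ d₃ where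
  subset := h₁.subset.trans h₂.subset
  add_eq hx hy := (h₂.add_eq (h₁.subset hx) (h₁.subset hy)).trans (h₁.add_eq hx hy)
  mul_eq hx hy := (h₂.mul_eq (h₁.subset hx) (h₁.subset hy)).trans (h₁.mul_eq hx hy)
  neg_eq hx := (h₂.neg_eq (h₁.subset hx)).trans (h₁.neg_eq hx)
  zero_eq := h₂.zero_eq.trans h₁.zero_eq
  one_eq := h₂.one_eq.trans h₁.one_eq
  val_eq hx := (h₂.val_eq (h₁.subset hx)).trans (h₁.val_eq hx)
  emb_eq := h₂.emb_eq.trans h₁.emb_eq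

section Chain

variable {c : Set (ImmediateExtOn S w)} {d d₀ : ImmediateExtOn S w} {x y z : S}

noncomputable def chainRep (c : Set (ImmediateExtOn S w)) (d₀ : ImmediateExtOn S w) (x y : S) :
    ImmediateExtOn S w :=
  open Classical in
  if h : ∃ d ∈ c, x ∈ d.carrier ∧ y ∈ d.carrier then h.choose else d₀

theorem chainRep_spec (hd : d ∈ c) (hx : x ∈ d.carrier) (hy : y ∈ d.carrier) :
    chainRep c d₀ x y ∈ c ∧ x ∈ (chainRep c d₀ x y).carrier ∧ y ∈ (chainRep c d₀ x y).carrier := by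
  have h : ∃ d ∈ c, x ∈ d.carrier ∧ y ∈ d.carrier := ⟨d, hd, hx, hy⟩
  rw [chainRep, dif_pos h]
  exact h.choose_spec

theorem chainRep_agree (hc : IsChain Le c) (hd : d ∈ c) (hx : x ∈ d.carrier)
    (hy : y ∈ d.carrier) :
    (chainRep c d₀ x y).add x y = d.add x y ∧ (chainRep c d₀ x y).mul x y = d.mul x y ∧
      (chainRep c d₀ x y).neg x = d.neg x ∧ (chainRep c d₀ x y).val x = d.val x := by
  obtain ⟨hr, hxr, hyr⟩ := chainRep_spec (d₀ := d₀) hd hx hy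
  rcases hc.total hr hd with h | h
  · exact ⟨(h.add_eq hxr hyr).symm, (h.mul_eq hxr hyr).symm, (h.neg_eq hxr).symm,
      (h.val_eq hxr).symm⟩
  · exact ⟨h.add_eq hx hy, h.mul_eq hx hy, h.neg_eq hx, h.val_eq hx⟩

theorem chainRep_add (hc : IsChain Le c) (hd : d ∈ c) (hx : x ∈ d.carrier) (hy : y ∈ d.carrier) :
    (chainRep c d₀ x y).add x y = d.add x y :=
  (chainRep_agree hc hd hx hy).1

theorem chainRep_mul (hc : IsChain Le c) (hd : d ∈ c) (hx : x ∈ d.carrier) (hy : y ∈ d.carrier) :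
    (chainRep c d₀ x y).mul x y = d.mul x y :=
  (chainRep_agree hc hd hx hy).2.1

theorem chainRep_neg (hc : IsChain Le c) (hd : d ∈ c) (hx : x ∈ d.carrier) :
    (chainRep c d₀ x x).neg x = d.neg x :=
  (chainRep_agree hc hd hx hx).2.2.1

theorem chainRep_val (hc : IsChain Le c) (hd : d ∈ c) (hx : x ∈ d.carrier) :
    (chainRep c d₀ x x).val x = d.val x :=
  (chainRep_agree hc hd hx hx).2.2.2

theorem zero_one_emb_eq_of_mem (hc : IsChain Le c) (hd : d ∈ c) (hd₀ : d₀ ∈ c) :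
    d.zero = d₀.zero ∧ d.one = d₀.one ∧ d.emb = d₀.emb := by
  rcases hc.total hd hd₀ with h | h
  · exact ⟨h.zero_eq.symm, h.one_eq.symm, h.emb_eq.symm⟩
  · exact ⟨h.zero_eq, h.one_eq, h.emb_eq⟩

theorem exists_mem_carrier₃ (hc : IsChain Le c) (hx : ∃ d ∈ c, x ∈ d.carrier)
    (hy : ∃ d ∈ c, y ∈ d.carrier) (hz : ∃ d ∈ c, z ∈ d.carrier) :
    ∃ d ∈ c, x ∈ d.carrier ∧ y ∈ d.carrier ∧ z ∈ d.carrier := by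
  obtain ⟨dx, hdx, hx⟩ := hx
  obtain ⟨dy, hdy, hy⟩ := hy
  obtain ⟨dz, hdz, hz⟩ := hz
  obtain ⟨d', hd', hxd', hyd'⟩ := hc.directedOn dx hdx dy hdy
  obtain ⟨d, hd, hd'd, hzd⟩ := hc.directedOn d' hd' dz hdz
  exact ⟨d, hd, hd'd.subset (hxd'.subset hx), hd'd.subset (hyd'.subset hy), hzd.subset hz⟩

noncomputable def chainSup (hc : IsChain Le c) (hd₀ : d₀ ∈ c) : ImmediateExtOn S w where
  carrier := {x | ∃ d ∈ c, x ∈ d.carrier}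
  add x y := (chainRep c d₀ x y).add x y
  mul x y := (chainRep c d₀ x y).mul x y
  neg x := (chainRep c d₀ x x).neg x
  zero := d₀.zero
  one := d₀.one
  val x := (chainRep c d₀ x x).val x
  emb := d₀.emb
  add_mem hx hy := by
    obtain ⟨d, hd, hx, hy, -⟩ := exists_mem_carrier₃ hc hx hy hy
    exact ⟨d, hd, by simp only [chainRep_add hc hd hx hy, d.add_mem hx hy]⟩
  mul_mem hx hy := by
    obtain ⟨d, hd, hx, hy, -⟩ := exists_mem_carrier₃ hc hx hy hy
    exact ⟨d, hd, by simp only [chainRep_mul hc hd hx hy, d.mul_mem hx hy]⟩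
  neg_mem := by
    rintro x ⟨d, hd, hx⟩
    exact ⟨d, hd, by simp only [chainRep_neg hc hd hx, d.neg_mem hx]⟩
  zero_mem := ⟨d₀, hd₀, d₀.zero_mem⟩
  one_mem := ⟨d₀, hd₀, d₀.one_mem⟩
  emb_mem a := ⟨d₀, hd₀, d₀.emb_mem a⟩
  add_assoc hx hy hz := by
    obtain ⟨d, hd, hx, hy, hz⟩ := exists_mem_carrier₃ hc hx hy hz
    simp only [chainRep_add hc hd, hx, hy, hz, d.add_mem, d.add_assoc hx hy hz]
  zero_add := by
    rintro x ⟨d, hd, hx⟩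
    simp only [← (zero_one_emb_eq_of_mem hc hd hd₀).1, chainRep_add hc hd d.zero_mem hx,
      d.zero_add hx]
  neg_add_cancel := by
    rintro x ⟨d, hd, hx⟩
    simp only [← (zero_one_emb_eq_of_mem hc hd hd₀).1, chainRep_neg hc hd hx,
      chainRep_add hc hd (d.neg_mem hx) hx, d.neg_add_cancel hx]
  mul_assoc hx hy hz := by
    obtain ⟨d, hd, hx, hy, hz⟩ := exists_mem_carrier₃ hc hx hy hz
    simp only [chainRep_mul hc hd, hx, hy, hz, d.mul_mem, d.mul_assoc hx hy hz]
  mul_comm hx hy := by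
    obtain ⟨d, hd, hx, hy, -⟩ := exists_mem_carrier₃ hc hx hy hy
    simp only [chainRep_mul hc hd, hx, hy, d.mul_comm hx hy]
  one_mul := by
    rintro x ⟨d, hd, hx⟩
    simp only [← (zero_one_emb_eq_of_mem hc hd hd₀).2.1, chainRep_mul hc hd d.one_mem hx,
      d.one_mul hx]
  left_distrib hx hy hz := by
    obtain ⟨d, hd, hx, hy, hz⟩ := exists_mem_carrier₃ hc hx hy hz
    simp only [chainRep_add hc hd, chainRep_mul hc hd, hx, hy, hz, d.add_mem, d.mul_mem,
      d.left_distrib hx hy hz]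
  zero_ne_one := d₀.zero_ne_one
  exists_mul_eq_one := by
    rintro x ⟨d, hd, hx⟩ hx0
    obtain ⟨hzero, hone, -⟩ := zero_one_emb_eq_of_mem hc hd hd₀
    obtain ⟨y, hy, hxy⟩ := d.exists_mul_eq_one hx (hzero ▸ hx0)
    exact ⟨y, ⟨d, hd, hy⟩, by simp only [chainRep_mul hc hd hx hy, hxy, hone]⟩
  emb_add a b := by simp only [chainRep_add hc hd₀, d₀.emb_mem, d₀.emb_add]
  emb_mul a b := by simp only [chainRep_mul hc hd₀, d₀.emb_mem, d₀.emb_mul]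
  emb_one := d₀.emb_one
  val_mul hx hy := by
    obtain ⟨d, hd, hx, hy, -⟩ := exists_mem_carrier₃ hc hx hy hy
    simp only [chainRep_mul hc hd, chainRep_val hc hd, hx, hy, d.mul_mem, d.val_mul hx hy]
  val_add hx hy := by
    obtain ⟨d, hd, hx, hy, -⟩ := exists_mem_carrier₃ hc hx hy hy
    simpa only [chainRep_add hc hd, chainRep_val hc hd, hx, hy, d.add_mem] using d.val_add hx hy
  val_emb a := by simp only [chainRep_val hc hd₀, d₀.emb_mem, d₀.val_emb]
  exists_val_emb_eq := by
    rintro x ⟨d, hd, hx⟩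
    obtain ⟨a, ha⟩ := d.exists_val_emb_eq hx
    refine ⟨a, ?_⟩
    simp only [← (zero_one_emb_eq_of_mem hc hd hd₀).2.2, chainRep_val hc hd, hx, d.emb_mem, ha]
  exists_val_sub_emb_lt_one := by
    rintro x ⟨d, hd, hx⟩ hx1
    rw [chainRep_val hc hd hx] at hx1
    obtain ⟨a, ha⟩ := d.exists_val_sub_emb_lt_one hx hx1
    refine ⟨a, ?_⟩
    have hxa := d.add_mem hx (d.neg_mem (d.emb_mem a))
    simpa only [← (zero_one_emb_eq_of_mem hc hd hd₀).2.2, chainRep_neg hc hd (d.emb_mem a),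
      chainRep_add hc hd hx (d.neg_mem (d.emb_mem a)), chainRep_val hc hd hxa] using ha

theorem le_chainSup (hc : IsChain Le c) (hd₀ : d₀ ∈ c) (hd : d ∈ c) : Le d (chainSup hc hd₀) where
  subset _ hx := ⟨d, hd, hx⟩
  add_eq := chainRep_add hc hd
  mul_eq := chainRep_mul hc hd
  neg_eq := chainRep_neg hc hd
  zero_eq := (zero_one_emb_eq_of_mem hc hd hd₀).1.symm
  one_eq := (zero_one_emb_eq_of_mem hc hd hd₀).2.1.symm
  val_eq := chainRep_val hc hd
  emb_eq := (zero_one_emb_eq_of_mem hc hd hd₀).2.2.symm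

end Chain

section Bundled

variable (d : ImmediateExtOn S w)

instance : Add d.carrier := ⟨fun x y => ⟨d.add x y, d.add_mem x.2 y.2⟩⟩
instance : Mul d.carrier := ⟨fun x y => ⟨d.mul x y, d.mul_mem x.2 y.2⟩⟩
instance : Neg d.carrier := ⟨fun x => ⟨d.neg x, d.neg_mem x.2⟩⟩
instance : Zero d.carrier := ⟨⟨d.zero, d.zero_mem⟩⟩
instance : One d.carrier := ⟨⟨d.one, d.one_mem⟩⟩

noncomputable instance : Field d.carrier :=
  letI := CommRing.ofMinimalAxioms (R := d.carrier)
    (fun x y z => Subtype.ext (d.add_assoc x.2 y.2 z.2)) (fun x => Subtype.ext (d.zero_add x.2))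
    (fun x => Subtype.ext (d.neg_add_cancel x.2))
    (fun x y z => Subtype.ext (d.mul_assoc x.2 y.2 z.2))
    (fun x y => Subtype.ext (d.mul_comm x.2 y.2)) (fun x => Subtype.ext (d.one_mul x.2))
    (fun x y z => Subtype.ext (d.left_distrib x.2 y.2 z.2))
  IsField.toField
    { exists_pair_ne := ⟨0, 1, fun h => d.zero_ne_one (congrArg Subtype.val h)⟩
      mul_comm := _root_.mul_comm
      mul_inv_cancel := fun {x} hx => by
        obtain ⟨y, hy, hxy⟩ := d.exists_mul_eq_one x.2 fun h => hx (Subtype.ext h)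
        exact ⟨⟨y, hy⟩, Subtype.ext hxy⟩ }

noncomputable def embedding : L →+* d.carrier :=
  RingHom.mk' ⟨⟨fun a => ⟨d.emb a, d.emb_mem a⟩, Subtype.ext d.emb_one⟩,
    fun a b => Subtype.ext (d.emb_mul a b)⟩ fun a b => Subtype.ext (d.emb_add a b)

noncomputable def valuation : Valuation d.carrier Γ where
  toFun x := d.val x
  map_zero' := by
    rw [← map_zero d.embedding]
    exact (d.val_emb 0).trans w.map_zero
  map_one' := by
    rw [← map_one d.embedding]
    exact (d.val_emb 1).trans w.map_one
  map_mul' x y := d.val_mul x.2 y.2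
  map_add_le_max' x y := d.val_add x.2 y.2

theorem valuation_comap_embedding : d.valuation.comap d.embedding = w :=
  Valuation.ext d.val_emb

theorem isImmediate : IsImmediate d.embedding d.valuation :=
  ⟨fun x => d.exists_val_emb_eq x.2, fun x hx => d.exists_val_sub_emb_lt_one x.2 hx⟩

end Bundled

section OfInjective

variable {N : Type*} [Field N] {wN : Valuation N Γ} {j : L →+* N} {h : N → S}

noncomputable def ofInjective (hcomap : wN.comap j = w) (himm : IsImmediate j wN)
    (hh : h.Injective) : ImmediateExtOn S w where
  carrier := Set.range h
  add x y := h (Function.invFun h x + Function.invFun h y)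
  mul x y := h (Function.invFun h x * Function.invFun h y)
  neg x := h (-Function.invFun h x)
  zero := h 0
  one := h 1
  val x := wN (Function.invFun h x)
  emb a := h (j a)
  add_mem _ _ := Set.mem_range_self _
  mul_mem _ _ := Set.mem_range_self _
  neg_mem _ := Set.mem_range_self _
  zero_mem := Set.mem_range_self _
  one_mem := Set.mem_range_self _
  emb_mem _ := Set.mem_range_self _
  add_assoc := by
    rintro _ _ _ ⟨a, rfl⟩ ⟨b, rfl⟩ ⟨c, rfl⟩
    simp only [Function.leftInverse_invFun hh _, _root_.add_assoc]
  zero_add := by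
    rintro _ ⟨a, rfl⟩
    simp only [Function.leftInverse_invFun hh _, _root_.zero_add]
  neg_add_cancel := by
    rintro _ ⟨a, rfl⟩
    simp only [Function.leftInverse_invFun hh _, _root_.neg_add_cancel]
  mul_assoc := by
    rintro _ _ _ ⟨a, rfl⟩ ⟨b, rfl⟩ ⟨c, rfl⟩
    simp only [Function.leftInverse_invFun hh _, _root_.mul_assoc]
  mul_comm := by
    rintro _ _ ⟨a, rfl⟩ ⟨b, rfl⟩
    simp only [Function.leftInverse_invFun hh _, _root_.mul_comm]
  one_mul := by
    rintro _ ⟨a, rfl⟩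
    simp only [Function.leftInverse_invFun hh _, _root_.one_mul]
  left_distrib := by
    rintro _ _ _ ⟨a, rfl⟩ ⟨b, rfl⟩ ⟨c, rfl⟩
    simp only [Function.leftInverse_invFun hh _, mul_add]
  zero_ne_one h01 := _root_.zero_ne_one (hh h01)
  exists_mul_eq_one := by
    rintro _ ⟨a, rfl⟩ ha
    refine ⟨h a⁻¹, Set.mem_range_self _, ?_⟩
    rw [Function.leftInverse_invFun hh, Function.leftInverse_invFun hh,
      mul_inv_cancel₀ (ne_of_apply_ne h ha)]
  emb_add a b := by simp only [Function.leftInverse_invFun hh _, map_add]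
  emb_mul a b := by simp only [Function.leftInverse_invFun hh _, map_mul]
  emb_one := by rw [map_one]
  val_mul := by
    rintro _ _ ⟨a, rfl⟩ ⟨b, rfl⟩
    simp only [Function.leftInverse_invFun hh _, map_mul]
  val_add := by
    rintro _ _ ⟨a, rfl⟩ ⟨b, rfl⟩
    simpa only [Function.leftInverse_invFun hh _] using wN.map_add a b
  val_emb a := by rw [Function.leftInverse_invFun hh, ← hcomap, Valuation.comap_apply]
  exists_val_emb_eq := by
    rintro _ ⟨a, rfl⟩
    simpa only [Function.leftInverse_invFun hh _] using himm.1 a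
  exists_val_sub_emb_lt_one := by
    rintro _ ⟨a, rfl⟩ ha
    simp only [Function.leftInverse_invFun hh _] at ha ⊢
    simpa only [sub_eq_add_neg] using himm.2 a ha

theorem le_ofInjective (hcomap : wN.comap j = w) (himm : IsImmediate j wN) (hh : h.Injective)
    (d : ImmediateExtOn S w) (g : d.carrier →+* N) (hval : wN.comap g = d.valuation)
    (hemb : g.comp d.embedding = j) (hgh : ∀ x, h (g x) = x) :
    Le d (ofInjective hcomap himm hh) := by
  have hinv : ∀ x (hx : x ∈ d.carrier), Function.invFun h x = g ⟨x, hx⟩ := fun x hx =>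
    (congrArg (Function.invFun h) (hgh ⟨x, hx⟩).symm).trans (Function.leftInverse_invFun hh _)
  refine
    { subset := fun x hx => ⟨g ⟨x, hx⟩, hgh ⟨x, hx⟩⟩
      add_eq := fun {x y} hx hy => ?_
      mul_eq := fun {x y} hx hy => ?_
      neg_eq := fun {x} hx => ?_
      zero_eq := ?_
      one_eq := ?_
      val_eq := fun {x} hx => ?_
      emb_eq := funext fun a => ?_ }
  · show h (Function.invFun h x + Function.invFun h y) = d.add x y
    rw [hinv x hx, hinv y hy, ← map_add]
    exact hgh _
  · show h (Function.invFun h x * Function.invFun h y) = d.mul x y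
    rw [hinv x hx, hinv y hy, ← map_mul]
    exact hgh _
  · show h (-Function.invFun h x) = d.neg x
    rw [hinv x hx, ← map_neg]
    exact hgh _
  · show h 0 = d.zero
    rw [← map_zero g]
    exact hgh _
  · show h 1 = d.one
    rw [← map_one g]
    exact hgh _
  · show wN (Function.invFun h x) = d.val x
    rw [hinv x hx]
    exact DFunLike.congr_fun hval _
  · show h (j a) = d.emb a
    rw [← hemb]
    exact hgh _

end OfInjective

end ImmediateExtOn

section Maximal

open Cardinal

variable {L T : Type u} [Field L] [Infinite T] {Γ : Type*} [LinearOrderedCommGroupWithZero Γ]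
  {w : Valuation L Γ}

/-- Since `T` bounds the size of every immediate extension of `(L, w)`, an immediate extension of
`d` fits into `Set T` beside `d.carrier` and would give a larger element. -/
theorem ImmediateExtOn.isMaximalValued_valuation
    (hT : ∀ (N : Type u) [Field N] (j : L →+* N) (wN : Valuation N Γ), IsImmediate j wN → #N ≤ #T)
    {d : ImmediateExtOn (Set T) w} (hd : ∀ d', Le d d' → Le d' d) :
    IsMaximalValued.{u, u'} d.valuation := by
  intro N _ ι Γ' _ vN hequiv himm
  obtain ⟨wN, hcomap, himmN⟩ := himm.exists_valuation_comap_eq hequiv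
  have himmL : IsImmediate (ι.comp d.embedding) wN :=
    IsImmediate.comp (by rw [hcomap]; exact d.isImmediate) himmN
  have hcomapL : wN.comap (ι.comp d.embedding) = w := by
    rw [Valuation.comap_comp, hcomap, d.valuation_comap_embedding]
  obtain ⟨h, hh, hext⟩ :=
    exists_injective_extend_val ι.injective (hT _ _ _ d.isImmediate) (hT _ _ _ himmL)
  have hge := hd _ (le_ofInjective hcomapL himmL hh d ι hcomap rfl hext)
  intro n
  have hn : h n ∈ d.carrier := hge.subset ⟨n, rfl⟩
  exact ⟨⟨h n, hn⟩, hh (hext _)⟩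

end Maximal

open Cardinal ImmediateExtOn in
/-- Krull's theorem. -/
theorem exists_maximal_immediate {L : Type u} [Field L] {Γ : Type*}
    [LinearOrderedCommGroupWithZero Γ] (w : Valuation L Γ) :
    ∃ (M : Type u) (_ : Field M) (j : L →+* M) (vM : Valuation M Γ),
      vM.comap j = w ∧ IsImmediate j vM ∧ IsMaximalValued.{u, u'} vM := by
  let T := (L → Set L) ⊕ ℕ
  have hT : ∀ (N : Type u) [Field N] (j : L →+* N) (wN : Valuation N Γ),
      IsImmediate j wN → #N ≤ #T := by
    intro N _ j wN himm
    obtain ⟨Φ, hΦ⟩ := himm.exists_injective_fun_set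
    exact mk_le_of_injective (Sum.inl_injective.comp hΦ)
  obtain ⟨e⟩ : Nonempty (L ↪ T) := (le_def _ _).1 (hT L _ w (isImmediate_id w))
  have : Nonempty (ImmediateExtOn (Set T) w) :=
    ⟨ofInjective (Valuation.comap_id w) (isImmediate_id w)
      (Set.singleton_injective.comp e.injective)⟩
  obtain ⟨d, hd⟩ := exists_maximal_of_nonempty_chains_bounded (α := ImmediateExtOn (Set T) w)
    (fun c hc ⟨d₀, hd₀⟩ => ⟨chainSup hc hd₀, fun _ hd => le_chainSup hc hd₀ hd⟩) Le.trans
  exact ⟨d.carrier, inferInstance, d.embedding, d.valuation, d.valuation_comap_embedding,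
    d.isImmediate, isMaximalValued_valuation hT hd⟩

end VFD

theorem algMaximal_of_unique_maximal_immediate_general
    {L₀ : Type u} [Field L₀] {Γ : Type u'} [LinearOrderedCommGroupWithZero Γ]
    (v : Valuation L₀ Γ) (C : Type u) [Field C] (ι : L₀ →+* C)
    (vC : Valuation C Γ)
    (huniq : ∀ (M : Type u) [Field M] (ιM : L₀ →+* M) (vM : Valuation M Γ),
      (vM.comap ιM).IsEquiv v → VFD.IsImmediate ιM vM →
      VFD.IsMaximalValued.{u, u'} vM →
      ∃ σ : M ≃+* C, (σ : M →+* C).comp ιM = ι ∧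
        (vC.comap (σ : M →+* C)).IsEquiv vM)
    (hrel : ∀ c : C, (letI := ι.toAlgebra; IsAlgebraic L₀ c) → c ∈ ι.range) :
    VFD.IsAlgMaximal.{u, u'} v := by
  intro L _ ιL Γ' _ vL halg hequiv himm
  obtain ⟨w, hw, himmw⟩ := himm.exists_valuation_comap_eq hequiv
  obtain ⟨M, _, j, vM, hvM, himmM, hmaxM⟩ := VFD.exists_maximal_immediate w
  obtain ⟨σ, hσ, -⟩ := huniq M (j.comp ιL) vM
    (.of_eq (by rw [Valuation.comap_comp, hvM, hw])) (VFD.IsImmediate.comp (hvM ▸ himmw) himmM)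
    hmaxM
  let φ : L →+* C := (σ : M →+* C).comp j
  have hφ : φ.comp ιL = ι := hσ
  intro y
  obtain ⟨x, hx⟩ := hrel (φ y) (by
    let _ := ιL.toAlgebra
    let _ := ι.toAlgebra
    exact (halg y).algHom ⟨φ, fun r => congrArg (· r) hφ⟩)
  exact ⟨x, φ.injective (by rw [← hx, ← RingHom.comp_apply, hφ])⟩

/-- Let `(L₀, v)` be a valued field admitting an immediate extension `(C, vC)`
which is a maximal valued field and is the unique maximal immediate extension
of `(L₀, v)` up to valuation-preserving isomorphism over `L₀` (e.g. the
completion of a suitable `(L₀,v)`), and suppose `L₀` is relatively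
algebraically closed in `C`. Then `(L₀, v)` is algebraically maximal. -/
theorem algMaximal_of_unique_maximal_immediate
    {L₀ : Type u} [Field L₀] {Γ : Type u'} [LinearOrderedCommGroupWithZero Γ]
    (v : Valuation L₀ Γ) (C : Type u) [Field C] (ι : L₀ →+* C)
    (vC : Valuation C Γ)
    (hext : (vC.comap ι).IsEquiv v) (himm : VFD.IsImmediate ι vC)
    (hmax : VFD.IsMaximalValued.{u, u'} vC)
    (huniq : ∀ (M : Type u) [Field M] (ιM : L₀ →+* M) (vM : Valuation M Γ),
      (vM.comap ιM).IsEquiv v → VFD.IsImmediate ιM vM →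
      VFD.IsMaximalValued.{u, u'} vM →
      ∃ σ : M ≃+* C, (σ : M →+* C).comp ιM = ι ∧
        (vC.comap (σ : M →+* C)).IsEquiv vM)
    (hrel : ∀ c : C, (letI := ι.toAlgebra; IsAlgebraic L₀ c) → c ∈ ι.range) :
    VFD.IsAlgMaximal.{u, u'} v :=
  algMaximal_of_unique_maximal_immediate_general v C ι vC huniq hrel
end
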